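/- For every element h of the set S = {e₁, e₂, ε, α, ε̄, ᾱ, εα, ε̄ᾱ, αε̄, ᾱε, εαε̄, ε̄ᾱε, ᾱεα, αε̄ᾱ, εαε̄ᾱ, ε̄ᾱεα} and every arrow γ ∈ {ε, ε̄, α, ᾱ} of Q, the product hγ in E can be written as Σ_{s∈S} z_s s with each coefficient z_s lying in the K-subalgebra of E generated by the central elements x and z. -/

import Mathlib

open FreeAlgebra

inductive Gen : Type | e1 | e2 | ep | eb | al | ab

variable (K : Type) [Field K]

/-- Relations presenting the preprojective algebra `E = KQ/⟨ε²+αᾱ, ε̄²+ᾱα⟩` of type `T̃₂`,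
the Ext algebra of the tame Hecke algebra `A`. -/
inductive RelE : FreeAlgebra K Gen → FreeAlgebra K Gen → Prop
  | sum : RelE (ι K .e1 + ι K .e2) 1
  | idem1 : RelE (ι K .e1 * ι K .e1) (ι K .e1)
  | idem2 : RelE (ι K .e2 * ι K .e2) (ι K .e2)
  | orth12 : RelE (ι K .e1 * ι K .e2) 0
  | orth21 : RelE (ι K .e2 * ι K .e1) 0
  | ep_l : RelE (ι K .e1 * ι K .ep) (ι K .ep)
  | ep_r : RelE (ι K .ep * ι K .e1) (ι K .ep)
  | eb_l : RelE (ι K .e2 * ι K .eb) (ι K .eb)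
  | eb_r : RelE (ι K .eb * ι K .e2) (ι K .eb)
  | al_l : RelE (ι K .e1 * ι K .al) (ι K .al)
  | al_r : RelE (ι K .al * ι K .e2) (ι K .al)
  | ab_l : RelE (ι K .e2 * ι K .ab) (ι K .ab)
  | ab_r : RelE (ι K .ab * ι K .e1) (ι K .ab)
  | rel1 : RelE (ι K .ep * ι K .ep + ι K .al * ι K .ab) 0
  | rel2 : RelE (ι K .eb * ι K .eb + ι K .ab * ι K .al) 0

/-- The preprojective algebra of type `T̃₂`. -/
abbrev PreprojE : Type := RingQuot (RelE K)

namespace PreprojE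

noncomputable def of (g : Gen) : PreprojE K := RingQuot.mkAlgHom K (RelE K) (ι K g)

noncomputable abbrev e₁ : PreprojE K := of K .e1
noncomputable abbrev e₂ : PreprojE K := of K .e2
noncomputable abbrev ε : PreprojE K := of K .ep
noncomputable abbrev εb : PreprojE K := of K .eb
noncomputable abbrev α : PreprojE K := of K .al
noncomputable abbrev αb : PreprojE K := of K .ab

/-- The central element `x = ε² + ε̄²`. -/
noncomputable def x : PreprojE K := ε K ^ 2 + εb K ^ 2

/-- The central element `z = εαε̄ᾱ + αε̄ᾱε + ε̄ᾱεα + ᾱεαε̄`. -/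
noncomputable def z : PreprojE K :=
  ε K * α K * εb K * αb K + α K * εb K * αb K * ε K +
    εb K * αb K * ε K * α K + αb K * ε K * α K * εb K

/-- The 16-element generating set `S`. -/
noncomputable def S : Set (PreprojE K) :=
  {e₁ K, e₂ K, ε K, α K, εb K, αb K, ε K * α K, εb K * αb K, α K * εb K, αb K * ε K,
    ε K * α K * εb K, εb K * αb K * ε K, αb K * ε K * α K, α K * εb K * αb K,
    ε K * α K * εb K * αb K, εb K * αb K * ε K * α K}

end PreprojE

/-!
Right multiplication by an arrow sends a path `h ∈ S` to zero unless the arrow starts where `h`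
ends. Otherwise `hγ` is a path of `S`, or it ends in one of `ε², αᾱ, ε̄², ᾱα`, which the
preprojective relations turn into `±x eᵢ`, so that `hγ = ±x h'` with `h' ∈ S` because `x` is
central; or it is one of the cycles `αε̄ᾱε, ᾱεαε̄, εαε̄ᾱε, ε̄ᾱεαε̄`, which differ from
`z e₁, z e₂, z ε, z ε̄` by `-εαε̄ᾱ, -ε̄ᾱεα, -x αε̄ᾱ, -x ᾱεα` respectively.
-/

theorem mul_eq_zero_of_eq_mul_of_eq_mul {M₀ : Type*} [SemigroupWithZero M₀] {e f a b : M₀}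
    (hef : e * f = 0) (ha : a = a * e) (hb : b = f * b) : a * b = 0 := by
  rw [ha, hb, mul_assoc, ← mul_assoc e, hef, zero_mul, mul_zero]

theorem commute_of_mul_eq_mul {M : Type*} [Semigroup M] {c d e f : M} (he : e * d = d)
    (hf : d * f = d) (h : c * e * d = d * (f * c)) : Commute c d := by
  rw [Commute, SemiconjBy, ← he, ← mul_assoc, h, ← mul_assoc, he, hf]

theorem Subalgebra.mul_mem_span {R A : Type*} [CommSemiring R] [Semiring A] [Algebra R A]
    {B : Subalgebra R A} {s : Set A} {c a : A} (hc : c ∈ B) (ha : a ∈ Submodule.span B s) :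
    c * a ∈ Submodule.span B s :=
  Submodule.smul_mem _ ⟨c, hc⟩ ha

theorem Subalgebra.mul_mem_span_of_mem {R A : Type*} [CommSemiring R] [Semiring A] [Algebra R A]
    {B : Subalgebra R A} {s : Set A} {c a : A} (hc : c ∈ B) (ha : a ∈ s) :
    c * a ∈ Submodule.span B s :=
  Subalgebra.mul_mem_span hc (Submodule.subset_span ha)

namespace PreprojE

variable {K}

theorem commute_of_forall_commute_of {a : PreprojE K} (h : ∀ g, Commute a (of K g))
    (b : PreprojE K) : Commute a b := by
  obtain ⟨c, rfl⟩ := RingQuot.mkAlgHom_surjective K (RelE K) b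
  induction c using FreeAlgebra.induction with
  | grade0 r => simpa using Algebra.commute_algebraMap_right r a
  | grade1 g => exact h g
  | mul _ _ h₁ h₂ => simpa using h₁.mul_right h₂
  | add _ _ h₁ h₂ => simpa using h₁.add_right h₂

theorem e₁_mul_e₁ : e₁ K * e₁ K = e₁ K := by
  simpa only [of, map_mul] using RingQuot.mkAlgHom_rel K (RelE.idem1 (K := K))
theorem e₂_mul_e₂ : e₂ K * e₂ K = e₂ K := by
  simpa only [of, map_mul] using RingQuot.mkAlgHom_rel K (RelE.idem2 (K := K))
theorem e₁_mul_e₂ : e₁ K * e₂ K = 0 := by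
  simpa only [of, map_mul, map_zero] using RingQuot.mkAlgHom_rel K (RelE.orth12 (K := K))
theorem e₂_mul_e₁ : e₂ K * e₁ K = 0 := by
  simpa only [of, map_mul, map_zero] using RingQuot.mkAlgHom_rel K (RelE.orth21 (K := K))
@[simp] theorem e₁_mul_ε : e₁ K * ε K = ε K := by
  simpa only [of, map_mul] using RingQuot.mkAlgHom_rel K (RelE.ep_l (K := K))
@[simp] theorem ε_mul_e₁ : ε K * e₁ K = ε K := by
  simpa only [of, map_mul] using RingQuot.mkAlgHom_rel K (RelE.ep_r (K := K))
@[simp] theorem e₂_mul_εb : e₂ K * εb K = εb K := by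
  simpa only [of, map_mul] using RingQuot.mkAlgHom_rel K (RelE.eb_l (K := K))
@[simp] theorem εb_mul_e₂ : εb K * e₂ K = εb K := by
  simpa only [of, map_mul] using RingQuot.mkAlgHom_rel K (RelE.eb_r (K := K))
@[simp] theorem e₁_mul_α : e₁ K * α K = α K := by
  simpa only [of, map_mul] using RingQuot.mkAlgHom_rel K (RelE.al_l (K := K))
@[simp] theorem α_mul_e₂ : α K * e₂ K = α K := by
  simpa only [of, map_mul] using RingQuot.mkAlgHom_rel K (RelE.al_r (K := K))
@[simp] theorem e₂_mul_αb : e₂ K * αb K = αb K := by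
  simpa only [of, map_mul] using RingQuot.mkAlgHom_rel K (RelE.ab_l (K := K))
@[simp] theorem αb_mul_e₁ : αb K * e₁ K = αb K := by
  simpa only [of, map_mul] using RingQuot.mkAlgHom_rel K (RelE.ab_r (K := K))
theorem ε_mul_ε_add_α_mul_αb : ε K * ε K + α K * αb K = 0 := by
  simpa only [of, map_mul, map_add, map_zero] using RingQuot.mkAlgHom_rel K (RelE.rel1 (K := K))
theorem εb_mul_εb_add_αb_mul_α : εb K * εb K + αb K * α K = 0 := by
  simpa only [of, map_mul, map_add, map_zero] using RingQuot.mkAlgHom_rel K (RelE.rel2 (K := K))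

@[simp] theorem e₁_mul_εb : e₁ K * εb K = 0 :=
  mul_eq_zero_of_eq_mul_of_eq_mul e₁_mul_e₂ e₁_mul_e₁.symm e₂_mul_εb.symm
@[simp] theorem e₁_mul_αb : e₁ K * αb K = 0 :=
  mul_eq_zero_of_eq_mul_of_eq_mul e₁_mul_e₂ e₁_mul_e₁.symm e₂_mul_αb.symm
@[simp] theorem e₂_mul_ε : e₂ K * ε K = 0 :=
  mul_eq_zero_of_eq_mul_of_eq_mul e₂_mul_e₁ e₂_mul_e₂.symm e₁_mul_ε.symm
@[simp] theorem e₂_mul_α : e₂ K * α K = 0 :=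
  mul_eq_zero_of_eq_mul_of_eq_mul e₂_mul_e₁ e₂_mul_e₂.symm e₁_mul_α.symm
@[simp] theorem ε_mul_e₂ : ε K * e₂ K = 0 :=
  mul_eq_zero_of_eq_mul_of_eq_mul e₁_mul_e₂ ε_mul_e₁.symm e₂_mul_e₂.symm
@[simp] theorem εb_mul_e₁ : εb K * e₁ K = 0 :=
  mul_eq_zero_of_eq_mul_of_eq_mul e₂_mul_e₁ εb_mul_e₂.symm e₁_mul_e₁.symm
@[simp] theorem α_mul_e₁ : α K * e₁ K = 0 :=
  mul_eq_zero_of_eq_mul_of_eq_mul e₂_mul_e₁ α_mul_e₂.symm e₁_mul_e₁.symm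
@[simp] theorem αb_mul_e₂ : αb K * e₂ K = 0 :=
  mul_eq_zero_of_eq_mul_of_eq_mul e₁_mul_e₂ αb_mul_e₁.symm e₂_mul_e₂.symm
@[simp] theorem ε_mul_εb : ε K * εb K = 0 :=
  mul_eq_zero_of_eq_mul_of_eq_mul e₁_mul_e₂ ε_mul_e₁.symm e₂_mul_εb.symm
@[simp] theorem ε_mul_αb : ε K * αb K = 0 :=
  mul_eq_zero_of_eq_mul_of_eq_mul e₁_mul_e₂ ε_mul_e₁.symm e₂_mul_αb.symm
@[simp] theorem εb_mul_ε : εb K * ε K = 0 :=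
  mul_eq_zero_of_eq_mul_of_eq_mul e₂_mul_e₁ εb_mul_e₂.symm e₁_mul_ε.symm
@[simp] theorem εb_mul_α : εb K * α K = 0 :=
  mul_eq_zero_of_eq_mul_of_eq_mul e₂_mul_e₁ εb_mul_e₂.symm e₁_mul_α.symm
@[simp] theorem α_mul_ε : α K * ε K = 0 :=
  mul_eq_zero_of_eq_mul_of_eq_mul e₂_mul_e₁ α_mul_e₂.symm e₁_mul_ε.symm
@[simp] theorem α_mul_α : α K * α K = 0 :=
  mul_eq_zero_of_eq_mul_of_eq_mul e₂_mul_e₁ α_mul_e₂.symm e₁_mul_α.symm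
@[simp] theorem αb_mul_εb : αb K * εb K = 0 :=
  mul_eq_zero_of_eq_mul_of_eq_mul e₁_mul_e₂ αb_mul_e₁.symm e₂_mul_εb.symm
@[simp] theorem αb_mul_αb : αb K * αb K = 0 :=
  mul_eq_zero_of_eq_mul_of_eq_mul e₁_mul_e₂ αb_mul_e₁.symm e₂_mul_αb.symm

theorem ε_mul_ε : ε K * ε K = x K * e₁ K := by
  simp [x, sq, add_mul, mul_assoc]
theorem εb_mul_εb : εb K * εb K = x K * e₂ K := by
  simp [x, sq, add_mul, mul_assoc]
theorem e₁_mul_x : e₁ K * x K = ε K * ε K := by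
  simp [x, sq, mul_add, ← mul_assoc]
theorem e₂_mul_x : e₂ K * x K = εb K * εb K := by
  simp [x, sq, mul_add, ← mul_assoc]

/- `-` on `PreprojE K` is built from `FreeAlgebra.instRing`, which is not reducibly defeq to the
semiring structure behind `*` and `Submodule.span`; so `neg_mul`, `mul_neg` and
`Submodule.sub_mem` do not fire under `rw`/`simp` and are applied as terms below. -/

theorem ε_mul_ε_mul_α : ε K * ε K * α K = α K * (εb K * εb K) :=
  calc ε K * ε K * α K = -(α K * αb K) * α K := by
        rw [eq_neg_of_add_eq_zero_left ε_mul_ε_add_α_mul_αb]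
    _ = α K * -(αb K * α K) := (neg_mul (α K * αb K) (α K)).trans <| by
        rw [mul_assoc]; exact (mul_neg (α K) (αb K * α K)).symm
    _ = α K * (εb K * εb K) := by rw [eq_neg_of_add_eq_zero_left εb_mul_εb_add_αb_mul_α]

theorem εb_mul_εb_mul_αb : εb K * εb K * αb K = αb K * (ε K * ε K) :=
  calc εb K * εb K * αb K = -(αb K * α K) * αb K := by
        rw [eq_neg_of_add_eq_zero_left εb_mul_εb_add_αb_mul_α]
    _ = αb K * -(α K * αb K) := (neg_mul (αb K * α K) (αb K)).trans <| by
        rw [mul_assoc]; exact (mul_neg (αb K) (α K * αb K)).symm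
    _ = αb K * (ε K * ε K) := by rw [eq_neg_of_add_eq_zero_left ε_mul_ε_add_α_mul_αb]

theorem commute_x (a : PreprojE K) : Commute (x K) a := by
  refine commute_of_forall_commute_of (fun g ↦ ?_) a
  cases g
  · exact ε_mul_ε.symm.trans e₁_mul_x.symm
  · exact εb_mul_εb.symm.trans e₂_mul_x.symm
  · exact commute_of_mul_eq_mul e₁_mul_ε ε_mul_e₁ (by rw [← ε_mul_ε, e₁_mul_x, mul_assoc])
  · exact commute_of_mul_eq_mul e₂_mul_εb εb_mul_e₂ (by rw [← εb_mul_εb, e₂_mul_x, mul_assoc])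
  · exact commute_of_mul_eq_mul e₁_mul_α α_mul_e₂ (by rw [← ε_mul_ε, e₂_mul_x, ε_mul_ε_mul_α])
  · exact commute_of_mul_eq_mul e₂_mul_αb αb_mul_e₁
      (by rw [← εb_mul_εb, e₁_mul_x, εb_mul_εb_mul_αb])

theorem mul_x_mul (a b : PreprojE K) : a * (x K * b) = x K * (a * b) :=
  (commute_x a).symm.left_comm b

theorem mul_neg_x_mul (a b : PreprojE K) : a * (-x K * b) = -x K * (a * b) :=
  (commute_x a).symm.neg_right.left_comm b

theorem α_mul_αb : α K * αb K = -x K * e₁ K := by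
  rw [eq_neg_of_add_eq_zero_right ε_mul_ε_add_α_mul_αb, ε_mul_ε]
  exact (neg_mul (x K) (e₁ K)).symm

theorem αb_mul_α : αb K * α K = -x K * e₂ K := by
  rw [eq_neg_of_add_eq_zero_right εb_mul_εb_add_αb_mul_α, εb_mul_εb]
  exact (neg_mul (x K) (e₂ K)).symm

theorem α_mul_εb_mul_αb_mul_ε :
    α K * εb K * αb K * ε K = z K * e₁ K - ε K * α K * εb K * αb K := by
  rw [eq_sub_iff_add_eq']
  simp [z, add_mul, mul_assoc]

theorem αb_mul_ε_mul_α_mul_εb :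
    αb K * ε K * α K * εb K = z K * e₂ K - εb K * αb K * ε K * α K := by
  rw [eq_sub_iff_add_eq']
  simp [z, add_mul, mul_assoc]

theorem ε_mul_α_mul_εb_mul_αb_mul_ε :
    ε K * α K * εb K * αb K * ε K = z K * ε K - x K * (α K * εb K * αb K) := by
  rw [eq_sub_iff_add_eq]
  simp [z, add_mul, mul_assoc, ε_mul_ε, mul_x_mul]

theorem εb_mul_αb_mul_ε_mul_α_mul_εb :
    εb K * αb K * ε K * α K * εb K = z K * εb K - x K * (αb K * ε K * α K) := by
  rw [eq_sub_iff_add_eq]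
  simp [z, add_mul, mul_assoc, εb_mul_εb, mul_x_mul]

theorem sub_mem_span {B : Subalgebra K (PreprojE K)} {s : Set (PreprojE K)} {a b : PreprojE K}
    (ha : a ∈ Submodule.span B s) (hb : b ∈ Submodule.span B s) :
    a - b ∈ Submodule.span B s := by
  rw [sub_eq_add_neg, ← neg_one_mul b]
  exact add_mem ha (Subalgebra.mul_mem_span (neg_mem (one_mem _)) hb)

theorem x_mem_adjoin : x K ∈ Algebra.adjoin K {x K, z K} := Algebra.subset_adjoin (by simp)
theorem z_mem_adjoin : z K ∈ Algebra.adjoin K {x K, z K} := Algebra.subset_adjoin (by simp)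
theorem neg_x_mem_adjoin : -x K ∈ Algebra.adjoin K {x K, z K} := neg_mem x_mem_adjoin

end PreprojE

open PreprojE in
theorem S_mul_arrow_in_span_general (K : Type) [Field K] :
    ∀ h ∈ S K, ∀ γ ∈ ({ε K, εb K, α K, αb K} : Set (PreprojE K)),
      h * γ ∈ Submodule.span (Algebra.adjoin K ({x K, z K} : Set (PreprojE K))) (S K) := by
  intro h hh γ hγ
  simp only [S, Set.mem_insert_iff, Set.mem_singleton_iff] at hh hγ
  rcases hh with rfl | rfl | rfl | rfl | rfl | rfl | rfl | rfl | rfl | rfl | rfl | rfl | rfl | rfl |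
    rfl | rfl <;> rcases hγ with rfl | rfl | rfl | rfl <;>
    -- The cycles outside `S` that do not end in a square are traded for `z`; right-associated,
    -- every other product is decided by its last two letters (zero, `±x eᵢ`, or a path of `S`).
    (try simp only [α_mul_εb_mul_αb_mul_ε, αb_mul_ε_mul_α_mul_εb, ε_mul_α_mul_εb_mul_αb_mul_ε,
      εb_mul_αb_mul_ε_mul_α_mul_εb]) <;>
    simp only [S, mul_assoc, ε_mul_ε, εb_mul_εb, α_mul_αb, αb_mul_α, mul_x_mul, mul_neg_x_mul,
      e₁_mul_ε, e₁_mul_α, e₂_mul_εb, e₂_mul_αb, ε_mul_e₁, α_mul_e₂, εb_mul_e₂, αb_mul_e₁,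
      e₁_mul_εb, e₁_mul_αb, e₂_mul_ε, e₂_mul_α, ε_mul_εb, ε_mul_αb, εb_mul_ε, εb_mul_α,
      α_mul_ε, α_mul_α, αb_mul_εb, αb_mul_αb, mul_zero, zero_mem,
      sub_mem_span, Submodule.mem_span_of_mem, Subalgebra.mul_mem_span_of_mem,
      x_mem_adjoin, z_mem_adjoin, neg_x_mem_adjoin,
      Set.mem_insert_iff, Set.mem_singleton_iff, true_or, or_true]

open PreprojE in
/-- For every `h ∈ S` and every arrow `γ` of `Q`, the product `hγ` lies in the span of `S`
over the subalgebra of `E` generated by the central elements `x` and `z`. -/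
theorem S_mul_arrow_in_span (K : Type) [Field K] [IsAlgClosed K] :
    ∀ h ∈ S K, ∀ γ ∈ ({ε K, εb K, α K, αb K} : Set (PreprojE K)),
      h * γ ∈ Submodule.span (Algebra.adjoin K ({x K, z K} : Set (PreprojE K))) (S K) :=
  S_mul_arrow_in_span_general K
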